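/- arXiv:2009.13458 — 5 statements merged into one kernel-verified Lean document; each statement's English description precedes it below -/
import Mathlib

section
/- Let T=(V,A) be a tree with at least two vertices, T^M its moral graph (edges between vertices at distance 1 or 2 in T), and Y ⊆ V a set of 'corrupt' vertices such that every pair of distinct vertices in Y is at tree-distance at least 3, and every vertex of Y is at tree-distance at least 3 from every leaf of T. Define the perturbed graph G^U on V by: i ~ j in G^U iff i ~ j in T^M or there is a path from i to j in T^M all of whose intermediate vertices lie in Y. Then for every vertex i that is a leaf of T or lies in Y, the neighborhood of i in G^U equals exactly the set of vertices at tree-distance 1 or 2 from i. -/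
open SimpleGraph

/-- A leaf of a graph: a vertex with exactly one neighbor. -/
def IsLeaf {V : Type*} (G : SimpleGraph V) (i : V) : Prop := ∃! j, G.Adj i j

/-- The moral graph of `G`: vertices at distance 1 or 2 are joined. -/
def moral {V : Type*} (G : SimpleGraph V) : SimpleGraph V where
  Adj i j := i ≠ j ∧ G.dist i j ≤ 2
  symm := by
    constructor
    rintro i j ⟨h1, h2⟩
    exact ⟨h1.symm, by rwa [SimpleGraph.dist_comm]⟩
  loopless := by constructor; rintro i ⟨h, -⟩; exact h rfl

/-- The perturbed graph: `i ~ j` iff there is a walk in the moral graph from `i` to `j`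
all of whose intermediate vertices lie in the corrupt set `Y` (moral edges are included,
via the length-one walk). -/
def perturbed {V : Type*} (G : SimpleGraph V) (Y : Set V) : SimpleGraph V where
  Adj i j := i ≠ j ∧ ∃ p : (moral G).Walk i j, ∀ v ∈ p.support, v ≠ i → v ≠ j → v ∈ Y
  symm := by
    constructor
    rintro i j ⟨hne, p, hp⟩
    refine ⟨hne.symm, p.reverse, ?_⟩
    intro v hv hvi hvj
    rw [SimpleGraph.Walk.support_reverse, List.mem_reverse] at hv
    exact hp v hv hvj hvi
  loopless := by constructor; rintro i ⟨h, -⟩; exact h rfl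

/-- for a leaf or corrupt node `i`, the neighborhood in the perturbed graph
is exactly the set of vertices at tree-distance 1 or 2 from `i`. -/
theorem stmt_2 {V : Type*} (T : SimpleGraph V) (hT : T.IsTree) (Y : Set V)
    (hYY : ∀ x ∈ Y, ∀ y ∈ Y, x ≠ y → 3 ≤ T.dist x y)
    (hYL : ∀ y ∈ Y, ∀ l, IsLeaf T l → 3 ≤ T.dist y l)
    (i : V) (hi : IsLeaf T i ∨ i ∈ Y) :
    (perturbed T Y).neighborSet i = {j | T.dist i j = 1 ∨ T.dist i j = 2} := by

  ext j
  simp only [mem_neighborSet, Set.mem_setOf_eq]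
  constructor
  · rintro ⟨hne, p, hp⟩
    have hd2 : T.dist i j ≤ 2 := by
      cases p with
      | nil => exact absurd rfl hne
      | @cons _ b _ h q =>
        by_cases hbj : b = j
        · subst hbj; exact h.2
        · have hbY : b ∈ Y := hp b (by
            rw [SimpleGraph.Walk.support_cons]
            exact List.mem_cons_of_mem _ q.start_mem_support) (Ne.symm h.1) hbj
          exfalso
          have h2 := h.2
          rcases hi with hleaf | hiY
          · have := hYL b hbY i hleaf
            rw [SimpleGraph.dist_comm] at this
            omega
          · have := hYY i hiY b hbY h.1
            omega
    have hpos : 0 < T.dist i j := hT.isConnected.pos_dist_of_ne hne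
    omega
  · intro hd
    have hne : i ≠ j := by
      rintro rfl
      simp [SimpleGraph.dist_self] at hd
    refine ⟨hne, SimpleGraph.Walk.cons ⟨hne, by omega⟩ SimpleGraph.Walk.nil, ?_⟩
    intro v hv hvi hvj
    change v ∈ [i, j] at hv
    rw [List.mem_cons, List.mem_singleton] at hv
    rcases hv with rfl | rfl
    · exact absurd rfl hvi
    · exact absurd rfl hvj
end

section
/- Under the same setup (tree T, moral graph T^M, corrupt set Y with pairwise tree-distance ≥ 3 and distance ≥ 3 to all leaves, perturbed graph G^U): if a vertex i of T is neither a leaf of T nor in Y, then the set consisting of i and its neighbors in G^U does not form a clique in G^U. -/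
open SimpleGraph

section Aux
variable {V : Type*}

/-- In a tree, any path realizes the distance. -/
lemma tree_dist_eq {T : SimpleGraph V} (hT : T.IsTree) {u v : V}
    (p : T.Walk u v) (hp : p.IsPath) : T.dist u v = p.length := by
  obtain ⟨q, hq, hql⟩ := hT.isConnected.exists_path_of_dist u v
  have : (⟨p, hp⟩ : T.Path u v) = ⟨q, hq⟩ := hT.IsAcyclic.path_unique _ _
  have hpq : p = q := congrArg Subtype.val this
  rw [hpq, hql]

lemma perturbed_of_moral {G : SimpleGraph V} {Y : Set V} {u v : V}
    (h : (moral G).Adj u v) : (perturbed G Y).Adj u v := by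
  refine ⟨h.ne, Walk.cons h Walk.nil, ?_⟩
  intro w hw hwu hwv
  simp [Walk.support_cons, Walk.support_nil] at hw
  rcases hw with rfl | rfl
  · exact absurd rfl hwu
  · exact absurd rfl hwv

lemma key_aux {T : SimpleGraph V} {Y : Set V}
    (hYY : ∀ x ∈ Y, ∀ y ∈ Y, x ≠ y → 3 ≤ T.dist x y) {u v : V} :
    ∀ {a : V} (p : (moral T).Walk a v), u ≠ v →
      (∀ x ∈ p.support, x ≠ u → x ≠ v → x ∈ Y) →
      (a = u ∨ (a ∈ Y ∧ (moral T).Adj u a)) →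
      (moral T).Adj u v ∨ ∃ y ∈ Y, (moral T).Adj u y ∧ (moral T).Adj y v := by
  intro a p
  induction p with
  | nil =>
    rintro huv _ (rfl | ⟨haY, hua⟩)
    · exact absurd rfl huv
    · exact Or.inl hua
  | @cons a c v h q ih =>
    intro huv hsupp ha
    have hq : ∀ x ∈ q.support, x ≠ u → x ≠ v → x ∈ Y := by
      intro x hx; exact hsupp x (by simp [Walk.support_cons, hx])
    have hcY : c = u ∨ c = v ∨ c ∈ Y := by
      by_cases h1 : c = u
      · exact Or.inl h1
      by_cases h2 : c = v
      · exact Or.inr (Or.inl h2)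
      · exact Or.inr (Or.inr (hq c q.start_mem_support h1 h2))
    rcases ha with rfl | ⟨haY, hua⟩
    · rcases hcY with rfl | rfl | hcY
      · exact absurd rfl h.ne
      · exact Or.inl h
      · exact ih huv hq (Or.inr ⟨hcY, h⟩)
    · rcases hcY with rfl | rfl | hcY
      · exact ih huv hq (Or.inl rfl)
      · exact Or.inr ⟨a, haY, hua, h⟩
      · have hac : a ≠ c := h.ne
        have := hYY a haY c hcY hac
        have h2 : T.dist a c ≤ 2 := h.2
        omega

lemma key {T : SimpleGraph V} {Y : Set V}
    (hYY : ∀ x ∈ Y, ∀ y ∈ Y, x ≠ y → 3 ≤ T.dist x y)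
    {u v : V} (h : (perturbed T Y).Adj u v) :
    (moral T).Adj u v ∨ ∃ y ∈ Y, (moral T).Adj u y ∧ (moral T).Adj y v := by
  obtain ⟨hne, p, hp⟩ := h
  exact key_aux hYY p hne hp (Or.inl rfl)

end Aux

/-- if `i` is neither a leaf nor corrupt, then `i` together with its
perturbed-graph neighborhood is not a clique in the perturbed graph. -/
theorem stmt_3 {V : Type*} (T : SimpleGraph V) (hT : T.IsTree) (Y : Set V)
    (hYY : ∀ x ∈ Y, ∀ y ∈ Y, x ≠ y → 3 ≤ T.dist x y)
    (hYL : ∀ y ∈ Y, ∀ l, IsLeaf T l → 3 ≤ T.dist y l)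
    (h2hop : ∀ v : V, ∃ w : V, T.dist v w = 2)
    (i : V) (hleaf : ¬ IsLeaf T i) (hcor : i ∉ Y) :
    ¬ (perturbed T Y).IsClique (insert i ((perturbed T Y).neighborSet i)) := by
  intro hclq
  have hconn := hT.isConnected
  have nb : ∀ c d : V, T.Adj c d → ¬ IsLeaf T c → ∃ e, T.Adj c e ∧ e ≠ d := by
    intro c d hcd hnl
    by_contra hc
    push_neg at hc
    exact hnl ⟨d, hcd, fun k hk => hc k hk⟩
  obtain ⟨x, hx⟩ := h2hop i
  have hix : i ≠ x := by
    intro h; rw [h, SimpleGraph.dist_self] at hx; omega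
  obtain ⟨m, h1, h2⟩ : ∃ m, T.Adj i m ∧ T.Adj m x := by
    obtain ⟨p, hp⟩ := hconn.exists_walk_length_eq_dist i x
    rw [hx] at hp
    cases p with
    | nil => simp at hp
    | cons h q =>
      cases q with
      | nil => simp at hp
      | cons h2 q2 =>
        have h0 : q2.length = 0 := by simp only [Walk.length_cons] at hp; omega
        have := Walk.eq_of_length_eq_zero h0
        subst this
        exact ⟨_, h, h2⟩
  have hnadj : ¬ T.Adj i x := by
    intro hadj
    have : T.dist i x ≤ 1 := by simpa using SimpleGraph.dist_le hadj.toWalk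
    omega
  obtain ⟨b, hib, hbm⟩ := nb i m h1 hleaf
  have hxb : x ≠ b := by rintro rfl; exact hnadj hib
  have hmx : (moral T).Adj i x := ⟨hix, le_of_eq hx⟩
  have hxmem : x ∈ insert i ((perturbed T Y).neighborSet i) :=
    Set.mem_insert_of_mem _ (perturbed_of_moral hmx)
  by_cases hbleaf : IsLeaf T b
  · -- the pair (x, b) : T-distance 3, and b is a leaf
    have hc : (Walk.cons h2.symm (Walk.cons h1.symm (Walk.cons hib Walk.nil)) :
        T.Walk x b).IsPath := by
      simp [Walk.isPath_def, h2.ne, h2.ne', hix, Ne.symm hix, hxb, Ne.symm hxb,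
        h1.ne, h1.ne', hbm, Ne.symm hbm, hib.ne, hib.ne']
    have hdxb : T.dist x b = 3 := by
      have := tree_dist_eq hT _ hc
      simpa using this
    have hbmem : b ∈ insert i ((perturbed T Y).neighborSet i) := by
      refine Set.mem_insert_of_mem _ (perturbed_of_moral ⟨hib.ne, ?_⟩)
      have : T.dist i b ≤ 1 := by simpa using SimpleGraph.dist_le hib.toWalk
      omega
    have hadj : (perturbed T Y).Adj x b := hclq hxmem hbmem hxb
    rcases key hYY hadj with hm | ⟨y, hyY, hxy, hyb⟩
    · have := hm.2; omega
    · have h3 := hYL y hyY b hbleaf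
      have := hyb.2; omega
  · -- b is not a leaf: get w adjacent to b, w ≠ i
    obtain ⟨w, hbw, hwi⟩ := nb b i hib.symm hbleaf
    have hiw : i ≠ w := hwi.symm
    have hmw : m ≠ w := by
      rintro rfl
      have hpu := hT.IsAcyclic.path_unique
        (⟨Walk.cons h1 Walk.nil, by simp [Walk.isPath_def, h1.ne]⟩ : T.Path i m)
        ⟨Walk.cons hib (Walk.cons hbw Walk.nil), by
          simp [Walk.isPath_def, hib.ne, h1.ne, hbw.ne]⟩
      have := congrArg (fun q : T.Path i m => q.1.support) hpu
      simp at this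
    have hxw : x ≠ w := by
      rintro rfl
      have hpu := hT.IsAcyclic.path_unique
        (⟨Walk.cons h1 (Walk.cons h2 Walk.nil), by
          simp [Walk.isPath_def, h1.ne, hix, h2.ne]⟩ : T.Path i x)
        ⟨Walk.cons hib (Walk.cons hbw Walk.nil), by
          simp [Walk.isPath_def, hib.ne, hix, Ne.symm hxb]⟩
      have := congrArg (fun q : T.Path i x => q.1.support) hpu
      simp at this
      exact hbm this.symm
    -- the canonical path x - m - i - b - w
    have hcpath : (Walk.cons h2.symm (Walk.cons h1.symm (Walk.cons hib
        (Walk.cons hbw Walk.nil))) : T.Walk x w).IsPath := by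
      simp [Walk.isPath_def, h2.ne, h2.ne', hix, Ne.symm hix, hxb, Ne.symm hxb,
        h1.ne, h1.ne', hbm, Ne.symm hbm, hib.ne, hib.ne', hmw, Ne.symm hmw,
        hxw, Ne.symm hxw, hiw, hwi, hbw.ne, hbw.ne']
    have hdxw : T.dist x w = 4 := by
      have := tree_dist_eq hT _ hcpath
      simpa using this
    have hwmem : w ∈ insert i ((perturbed T Y).neighborSet i) := by
      refine Set.mem_insert_of_mem _ (perturbed_of_moral ⟨hiw, ?_⟩)
      have := SimpleGraph.dist_le (Walk.cons hib (Walk.cons hbw Walk.nil))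
      simpa using this
    have hadj : (perturbed T Y).Adj x w := hclq hxmem hwmem hxw
    rcases key hYY hadj with hm | ⟨y, hyY, hxy, hyw⟩
    · have := hm.2; omega
    · have dxy : T.dist x y ≤ 2 := hxy.2
      have dyw : T.dist y w ≤ 2 := hyw.2
      obtain ⟨p1, hp1⟩ := hconn.exists_walk_length_eq_dist x y
      obtain ⟨p2, hp2⟩ := hconn.exists_walk_length_eq_dist y w
      have hlen : (p1.append p2).length = 4 := by
        have hle : (p1.append p2).length ≤ 4 := by
          rw [Walk.length_append, hp1, hp2]; omega
        have hge := SimpleGraph.dist_le (p1.append p2)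
        omega
      have hqpath : (p1.append p2).IsPath :=
        (p1.append p2).isPath_of_length_eq_dist (by rw [hlen, hdxw])
      have hsupp := congrArg (fun q : T.Path x w => q.1.support)
        (hT.IsAcyclic.path_unique ⟨p1.append p2, hqpath⟩ ⟨_, hcpath⟩)
      have hy : y ∈ (p1.append p2).support := by
        rw [Walk.mem_support_append_iff]
        exact Or.inl p1.end_mem_support
      simp only at hsupp
      rw [hsupp] at hy
      simp at hy
      have dxm : T.dist x m ≤ 1 := by simpa using SimpleGraph.dist_le h2.symm.toWalk
      have dbw : T.dist b w ≤ 1 := by simpa using SimpleGraph.dist_le hbw.toWalk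
      rcases hy with rfl | rfl | rfl | rfl | rfl
      · omega
      · have := hconn.dist_triangle (u := x) (v := y) (w := w); omega
      · exact hcor hyY
      · have := hconn.dist_triangle (u := x) (v := y) (w := w); omega
      · omega
end

section
/- Under the same setup (tree T, moral graph T^M, corrupt set Y with pairwise tree-distance ≥ 3 and distance ≥ 3 to all leaves, perturbed graph G^U): if a vertex i of T is a leaf of T or lies in Y, then the set consisting of i and its neighbors in G^U forms a clique in G^U. -/
open SimpleGraph

/-- Auxiliary: if `i` is a leaf and `j` is a perturbed neighbor of `i`, then `j` is
at tree-distance at most 2 from `i`. -/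
lemma leaf_close {V : Type*} (T : SimpleGraph V) (Y : Set V)
    (hYL : ∀ y ∈ Y, ∀ l, IsLeaf T l → 3 ≤ T.dist y l)
    (i : V) (hi : IsLeaf T i) (j : V) (h : (perturbed T Y).Adj i j) :
    i ≠ j ∧ T.dist i j ≤ 2 := by
  obtain ⟨hne, p, hp⟩ := h
  refine ⟨hne, ?_⟩
  cases p with
  | nil => exact absurd rfl hne
  | @cons _ a _ h' q =>
    by_cases haj : a = j
    · subst haj; exact h'.2
    · have ha : a ∈ Y := by
        refine hp a ?_ (Ne.symm h'.1) haj
        simp only [SimpleGraph.Walk.support_cons, List.mem_cons]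
        exact Or.inr (SimpleGraph.Walk.start_mem_support q)
      have h3 := hYL a ha i hi
      have h2 : T.dist a i ≤ 2 := by rw [SimpleGraph.dist_comm]; exact h'.2
      omega

/-- Auxiliary: in a tree, if `i` is a leaf with unique neighbor `n` and `j ≠ i` is at
distance at most 2 from `i`, then `j` is at distance at most 1 from `n`. -/
lemma near_leaf {V : Type*} (T : SimpleGraph V) (hT : T.IsTree) (i n : V)
    (hn : T.Adj i n) (hu : ∀ y, T.Adj i y → y = n)
    (j : V) (hne : i ≠ j) (hd : T.dist i j ≤ 2) : T.dist n j ≤ 1 := by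
  obtain ⟨p, hp⟩ := hT.isConnected.exists_walk_length_eq_dist i j
  cases p with
  | nil => exact absurd rfl hne
  | @cons _ a _ h' q =>
    have ha : a = n := hu a h'
    subst ha
    cases q with
    | nil => simp [SimpleGraph.dist_self]
    | @cons _ b _ h2 r =>
      have hr : r.length = 0 := by
        simp [SimpleGraph.Walk.length_cons] at hp
        omega
      have hb : b = j := SimpleGraph.Walk.eq_of_length_eq_zero hr
      subst hb
      exact SimpleGraph.dist_le (SimpleGraph.Walk.cons h2 SimpleGraph.Walk.nil)

/-- if `i` is a leaf or a corrupt node, then `i` together with its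
perturbed-graph neighborhood forms a clique in the perturbed graph. -/
theorem stmt_4 {V : Type*} (T : SimpleGraph V) (hT : T.IsTree) (Y : Set V)
    (hYY : ∀ x ∈ Y, ∀ y ∈ Y, x ≠ y → 3 ≤ T.dist x y)
    (hYL : ∀ y ∈ Y, ∀ l, IsLeaf T l → 3 ≤ T.dist y l)
    (i : V) (hi : IsLeaf T i ∨ i ∈ Y) :
    (perturbed T Y).IsClique (insert i ((perturbed T Y).neighborSet i)) := by
  have key : ∀ j, (perturbed T Y).Adj i j → ∀ k, (perturbed T Y).Adj i k →
      j ≠ k → (perturbed T Y).Adj j k := by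
    intro j hj k hk hjk
    rcases hi with hleaf | hY
    · -- leaf case
      have hleaf' := hleaf
      obtain ⟨n, hn, hu⟩ := hleaf'
      have hu' : ∀ y, T.Adj i y → y = n := fun y hy => hu y hy
      obtain ⟨hij, hdj⟩ := leaf_close T Y hYL i hleaf j hj
      obtain ⟨hik, hdk⟩ := leaf_close T Y hYL i hleaf k hk
      have h1 : T.dist n j ≤ 1 := near_leaf T hT i n hn hu' j hij hdj
      have h2 : T.dist n k ≤ 1 := near_leaf T hT i n hn hu' k hik hdk
      have h1' : T.dist j n ≤ 1 := by rw [SimpleGraph.dist_comm]; exact h1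
      have hd : T.dist j k ≤ 2 := by
        have := hT.isConnected.dist_triangle (u := j) (v := n) (w := k)
        omega
      refine ⟨hjk, SimpleGraph.Walk.cons (show (moral T).Adj j k from ⟨hjk, hd⟩) SimpleGraph.Walk.nil, ?_⟩
      intro v hv hvj hvk
      simp [SimpleGraph.Walk.support_cons] at hv
      rcases hv with rfl | rfl
      · exact absurd rfl hvj
      · exact absurd rfl hvk
    · -- corrupt case: concatenate walks through i
      obtain ⟨hij, p, hp⟩ := hj
      obtain ⟨hik, q, hq⟩ := hk
      refine ⟨hjk, p.reverse.append q, ?_⟩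
      intro v hv hvj hvk
      rcases (SimpleGraph.Walk.mem_support_append_iff _ _).mp hv with hvp | hvq
      · rw [SimpleGraph.Walk.support_reverse, List.mem_reverse] at hvp
        by_cases hvi : v = i
        · subst hvi; exact hY
        · exact hp v hvp hvi hvj
      · by_cases hvi : v = i
        · subst hvi; exact hY
        · exact hq v hvq hvi hvk
  intro x hx y hy hxy
  rcases hx with rfl | hx
  · rcases hy with rfl | hy
    · exact absurd rfl hxy
    · exact hy
  · rcases hy with rfl | hy
    · exact (SimpleGraph.mem_neighborSet _ _ _ |>.mp hx).symm
    · exact key x hx y hy hxy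
end

section
/- Let T be a tree, let a,b be vertices with a−b an edge of T, and suppose both a and b are non-leaf vertices. Then there exist vertices c ≠ d, distinct from a and b, such that removing {a,b} from the moral graph T^M disconnects c from d. -/
open SimpleGraph

private lemma reach_or_aux {V : Type*} (T : SimpleGraph V) (a b x t : V)
    (w : T.Walk x t) :
    (T \ fromEdgeSet {s(a,b)}).Reachable x t ∨ (T \ fromEdgeSet {s(a,b)}).Reachable x a ∨
      (T \ fromEdgeSet {s(a,b)}).Reachable x b := by
  induction w with
  | nil => exact Or.inl (Reachable.refl _)
  | @cons x z _ h w ih =>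
    by_cases he : s(x, z) = s(a, b)
    · rw [Sym2.eq_iff] at he
      rcases he with ⟨rfl, rfl⟩ | ⟨rfl, rfl⟩
      · exact Or.inr (Or.inl (Reachable.refl _))
      · exact Or.inr (Or.inr (Reachable.refl _))
    · have hadj : (T \ fromEdgeSet {s(a,b)}).Adj x z := by
        simp only [sdiff_adj, fromEdgeSet_adj, Set.mem_singleton_iff]
        exact ⟨h, fun hc => he hc.1⟩
      rcases ih with h' | h' | h'
      · exact Or.inl (hadj.reachable.trans h')
      · exact Or.inr (Or.inl (hadj.reachable.trans h'))
      · exact Or.inr (Or.inr (hadj.reachable.trans h'))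

private lemma no_escape_aux {V : Type*} (T : SimpleGraph V) (a b d : V)
    (key : ∀ x y : V, (T \ fromEdgeSet {s(a,b)}).Reachable x a → x ≠ a → x ≠ b →
      y ≠ a → y ≠ b → (moral T).Adj x y → (T \ fromEdgeSet {s(a,b)}).Reachable y a) :
    ∀ (x : V) (p : (moral T).Walk x d), (T \ fromEdgeSet {s(a,b)}).Reachable x a →
      a ∉ p.support → b ∉ p.support → (T \ fromEdgeSet {s(a,b)}).Reachable d a := by
  intro x p
  induction p with
  | nil => intro hx _ _; exact hx
  | @cons x z _ h p ih =>
    intro hx hA hB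
    simp only [Walk.support_cons, List.mem_cons] at hA hB
    push_neg at hA hB
    have hz : (T \ fromEdgeSet {s(a,b)}).Reachable z a :=
      key x z hx (Ne.symm hA.1) (Ne.symm hB.1)
        (fun hc => hA.2 (hc ▸ p.start_mem_support))
        (fun hc => hB.2 (hc ▸ p.start_mem_support)) h
    exact ih hz hA.2 hB.2

/-- a true tree edge between two non-leaf vertices separates some pair of
other vertices in the moral graph: every moral-graph walk between them meets `{a, b}`. -/
theorem stmt_6 {V : Type*} (T : SimpleGraph V) (hT : T.IsTree) (a b : V)
    (hab : T.Adj a b) (ha : ¬ IsLeaf T a) (hb : ¬ IsLeaf T b) :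
    ∃ c d : V, c ≠ d ∧ c ≠ a ∧ c ≠ b ∧ d ≠ a ∧ d ≠ b ∧
      ∀ p : (moral T).Walk c d, a ∈ p.support ∨ b ∈ p.support := by
  classical
  set G' := T \ fromEdgeSet {s(a,b)} with hG'
  -- the edge ab is a bridge
  have hbridge : ¬ G'.Reachable a b := by
    have := (isAcyclic_iff_forall_edge_isBridge.mp hT.IsAcyclic) ((T.mem_edgeSet).mpr hab)
    exact isBridge_iff.mp this
  -- extract c
  obtain ⟨c, hac, hcb⟩ : ∃ c, T.Adj a c ∧ c ≠ b := by
    by_contra hc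
    push_neg at hc
    exact ha ⟨b, hab, fun y hy => by
      by_contra hne
      exact hne (hc y hy)⟩
  obtain ⟨d, hbd, hda⟩ : ∃ d, T.Adj b d ∧ d ≠ a := by
    by_contra hc
    push_neg at hc
    exact hb ⟨a, hab.symm, fun y hy => by
      by_contra hne
      exact hne (hc y hy)⟩
  have hca : c ≠ a := fun hc => T.loopless.irrefl a (hc ▸ hac)
  have hdb : d ≠ b := fun hc => T.loopless.irrefl b (hc ▸ hbd)
  -- edges ac and bd survive in G'
  have hac' : G'.Adj a c := by
    simp only [hG', sdiff_adj, fromEdgeSet_adj, Set.mem_singleton_iff]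
    refine ⟨hac, fun hc => ?_⟩
    rw [Sym2.eq_iff] at hc
    rcases hc with ⟨_, rfl⟩ | ⟨rfl, _⟩
    · exact hcb rfl
    · exact T.loopless.irrefl _ hab
  have hbd' : G'.Adj b d := by
    simp only [hG', sdiff_adj, fromEdgeSet_adj, Set.mem_singleton_iff]
    refine ⟨hbd, fun hc => ?_⟩
    rw [Sym2.eq_iff] at hc
    rcases hc with ⟨rfl, _⟩ | ⟨_, rfl⟩
    · exact T.loopless.irrefl _ hab
    · exact hda rfl
  have hcreach : G'.Reachable c a := hac'.symm.reachable
  have hdreach : G'.Reachable d b := hbd'.symm.reachable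
  have hcd : c ≠ d := by
    rintro rfl
    exact hbridge ((hcreach.symm).trans hdreach)
  -- key crossing lemma
  have key : ∀ x y : V, G'.Reachable x a → x ≠ a → x ≠ b →
      y ≠ a → y ≠ b → (moral T).Adj x y → G'.Reachable y a := by
    intro x y hxa hxna hxnb hyna hynb hmadj
    rcases reach_or_aux T a b y a ((hT.isConnected.preconnected y a).some) with h | h | h
    · exact h
    · exact h
    · exfalso
      obtain ⟨hxy, hdist⟩ := hmadj
      obtain ⟨w, hw⟩ := (hT.isConnected y x).exists_walk_length_eq_dist
      rw [SimpleGraph.dist_comm, ← hw] at hdist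
      clear hw
      -- w : T.Walk y x, length ≤ 2
      -- helper to treat a single tree edge
      have step : ∀ u v : V, T.Adj u v → G'.Adj u v ∨ (u = a ∧ v = b) ∨ (u = b ∧ v = a) := by
        intro u v huv
        by_cases he : s(u, v) = s(a, b)
        · rw [Sym2.eq_iff] at he
          exact Or.inr he
        · exact Or.inl (by
            simp only [hG', sdiff_adj, fromEdgeSet_adj, Set.mem_singleton_iff]
            exact ⟨huv, fun hc => he hc.1⟩)
      cases w with
      | nil => exact hxy rfl
      | @cons _ z _ h1 w' =>
        cases w' with
        | nil =>
          -- single edge y - x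
          rcases step y x h1 with hg | ⟨rfl, rfl⟩ | ⟨rfl, rfl⟩
          · exact hbridge ((hxa.symm.trans hg.symm.reachable).trans h)
          · exact hyna rfl
          · exact hxna rfl
        | @cons _ z' _ h2 w'' =>
          cases w'' with
          | nil =>
            -- y - z - x
            rcases step y z h1 with hg1 | ⟨rfl, rfl⟩ | ⟨rfl, rfl⟩
            · rcases step z x h2 with hg2 | ⟨rfl, rfl⟩ | ⟨rfl, rfl⟩
              · exact hbridge
                  (((hxa.symm.trans hg2.symm.reachable).trans hg1.symm.reachable).trans h)
              · exact hxnb rfl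
              · exact hxna rfl
            · exact hyna rfl
            · exact hynb rfl
          | cons h3 w''' =>
            simp only [Walk.length_cons] at hdist
            omega
  refine ⟨c, d, hcd, hca, hcb, hda, hdb, fun p => ?_⟩
  by_contra hcon
  push_neg at hcon
  have := no_escape_aux T a b d key c p hcreach hcon.1 hcon.2
  exact hbridge (this.symm.trans hdreach)
end

section
/- Let T be a tree and a,b distinct vertices that are adjacent in the moral graph T^M but such that a−b is not an edge of T (i.e., a and b are at tree-distance exactly 2). Then for every pair of vertices c,d distinct from a,b, removing {a,b} from T^M does not disconnect c from d, i.e., there is no pair c,d separated by {a,b} in T^M. -/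
open SimpleGraph

lemma aux_moral {V : Type*} (T : SimpleGraph V) (a b : V) (hnotT : ¬ T.Adj a b) :
    ∀ n (c d : V) (p : T.Walk c d), p.length = n → p.IsPath →
      c ≠ a → c ≠ b → d ≠ a → d ≠ b →
      ∃ q : (moral T).Walk c d, a ∉ q.support ∧ b ∉ q.support := by
  intro n
  induction n using Nat.strong_induction_on with
  | _ n IH =>
    intro c d p hlen hp hca hcb hda hdb
    cases p with
    | nil => exact ⟨Walk.nil, by simp [hca.symm], by simp [hcb.symm]⟩
    | @cons _ e _ h p' =>
      by_cases hea : e = a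
      · subst hea
        cases p' with
        | nil => exact absurd rfl hda
        | @cons _ f _ h' p'' =>
          have hfa : f ≠ e := h'.ne'
          have hfb : f ≠ b := by rintro rfl; exact hnotT h'
          have hcp : c ∉ (Walk.cons h' p'').support ∧ (Walk.cons h' p'').IsPath := by
            have := (Walk.cons_isPath_iff _ _).mp hp
            exact ⟨this.2, this.1⟩
          have hcf : c ≠ f := by
            rintro rfl
            exact hcp.1 (by rw [Walk.support_cons]; exact List.mem_cons_of_mem _ (Walk.start_mem_support _))
          have hn : p''.length + 2 = n := by simpa using hlen
          have hdist : T.dist c f ≤ 2 := by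
            have := SimpleGraph.dist_le (Walk.cons h (Walk.cons h' Walk.nil))
            simpa using this
          have hp'' : p''.IsPath := ((Walk.cons_isPath_iff _ _).mp hcp.2).1
          obtain ⟨q, hqa, hqb⟩ := IH (n - 2) (by omega) f d p''
            (by omega) hp'' hfa hfb hda hdb
          exact ⟨Walk.cons (show (moral T).Adj c f from ⟨hcf, hdist⟩) q,
            by rw [Walk.support_cons]; simp only [List.mem_cons]; push_neg;
               exact ⟨Ne.symm hca, hqa⟩,
            by rw [Walk.support_cons]; simp only [List.mem_cons]; push_neg;
               exact ⟨Ne.symm hcb, hqb⟩⟩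
      · by_cases heb : e = b
        · subst heb
          cases p' with
          | nil => exact absurd rfl hdb
          | @cons _ f _ h' p'' =>
            have hfb : f ≠ e := h'.ne'
            have hfa : f ≠ a := by rintro rfl; exact hnotT h'.symm
            have hcp : c ∉ (Walk.cons h' p'').support ∧ (Walk.cons h' p'').IsPath := by
              have := (Walk.cons_isPath_iff _ _).mp hp
              exact ⟨this.2, this.1⟩
            have hcf : c ≠ f := by
              rintro rfl
              exact hcp.1 (by rw [Walk.support_cons]; exact List.mem_cons_of_mem _ (Walk.start_mem_support _))
            have hn : p''.length + 2 = n := by simpa using hlen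
            have hdist : T.dist c f ≤ 2 := by
              have := SimpleGraph.dist_le (Walk.cons h (Walk.cons h' Walk.nil))
              simpa using this
            have hp'' : p''.IsPath := ((Walk.cons_isPath_iff _ _).mp hcp.2).1
            obtain ⟨q, hqa, hqb⟩ := IH (n - 2) (by omega) f d p''
              (by omega) hp'' hfa hfb hda hdb
            exact ⟨Walk.cons (show (moral T).Adj c f from ⟨hcf, hdist⟩) q,
            by rw [Walk.support_cons]; simp only [List.mem_cons]; push_neg;
               exact ⟨Ne.symm hca, hqa⟩,
            by rw [Walk.support_cons]; simp only [List.mem_cons]; push_neg;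
               exact ⟨Ne.symm hcb, hqb⟩⟩
        · have hce : c ≠ e := h.ne
          have hdist : T.dist c e ≤ 2 := by
            have := SimpleGraph.dist_le (Walk.cons h Walk.nil)
            simp at this; omega
          have hp' : p'.IsPath := ((Walk.cons_isPath_iff _ _).mp hp).1
          have hn : p'.length + 1 = n := by simpa using hlen
          obtain ⟨q, hqa, hqb⟩ := IH (n - 1) (by omega) e d p'
            (by omega) hp' hea heb hda hdb
          exact ⟨Walk.cons (show (moral T).Adj c e from ⟨hce, hdist⟩) q,
            by rw [Walk.support_cons]; simp only [List.mem_cons]; push_neg;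
               exact ⟨Ne.symm hca, hqa⟩,
            by rw [Walk.support_cons]; simp only [List.mem_cons]; push_neg;
               exact ⟨Ne.symm hcb, hqb⟩⟩


/-- a spurious moral-graph edge (vertices at tree-distance exactly 2)
separates no pair of other vertices: any two vertices distinct from `a, b` are joined
by a moral-graph walk avoiding both `a` and `b`. -/
theorem stmt_7 {V : Type*} (T : SimpleGraph V) (hT : T.IsTree) (a b : V)
    (hadj : (moral T).Adj a b) (hnotT : ¬ T.Adj a b)
    (c d : V) (hca : c ≠ a) (hcb : c ≠ b) (hda : d ≠ a) (hdb : d ≠ b) :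
    ∃ p : (moral T).Walk c d, a ∉ p.support ∧ b ∉ p.support := by
  classical
  obtain ⟨w⟩ := hT.isConnected.preconnected c d
  exact aux_moral T a b hnotT (w.toPath : T.Path c d).1.length c d
    (w.toPath : T.Path c d).1 rfl (w.toPath : T.Path c d).2 hca hcb hda hdb
end
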